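/- arXiv:1407.0465 — 2 statements merged into one kernel-verified Lean document; each statement's English description precedes it below -/
import Mathlib

section
/- (S-lemma with equality) Suppose there exist x', x'' ∈ ℝⁿ with h(x') < 0 < h(x''). Suppose furthermore that it is NOT the case that all of the following hold: A has exactly one negative eigenvalue (counted with multiplicity), B = 0, b ≠ 0, and the (n)×(n) symmetric matrix [[VᵀAV, Vᵀ(Ax₀ + a)], [(Ax₀ + a)ᵀV, f(x₀)]] is positive semidefinite, where x₀ = −(d/(2bᵀb))·b and V ∈ ℝ^{n×(n−1)} is a matrix whose columns form a basis of the null space {x ∈ ℝⁿ : bᵀx = 0}. Then the system f(x) < 0, h(x) = 0 has no solution x ∈ ℝⁿ if and only if there exists a real number μ such that f(x) + μ·h(x) ≥ 0 for all x ∈ ℝⁿ. -/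
/-!
Put `g = f + μ h`. The multipliers `μ` with `g ≥ 0` on `{h > 0}`, resp. on `{h < 0}`, form two
closed sets, each nonempty by the Slater condition. If they cover `ℝ`, connectedness of `ℝ` gives
a common `μ`, and that `μ` works since `g = f ≥ 0` on `{h = 0}`. They cover `ℝ` unless `h` takes
both signs on `{g < 0}`; but `h` does not vanish there, so it has constant sign along any path
in `{g < 0}`.

If `g` is convex, `{g < 0}` is convex, hence connected. Otherwise take `w` with `wᵀ M w < 0`.
Along each line in direction `w`, `g` is a concave quadratic, negative far out on both sides,
uniformly over compact families of lines; and each point of `{g < 0}` sees one end of its line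
within `{g < 0}`. So if `h` had both signs on `{g < 0}`, it would go from negative to positive
along every line in direction `w`, which forces `B w = 0` and `bᵀw > 0`. When `B ≠ 0`, `{h = 0}`
then contains parabolas along which `g` is a quartic with negative leading coefficient, a
contradiction.

When `B = 0`, nonnegativity of `f` on the hyperplane `{h = 0}` makes the bordered matrix
positive semidefinite and leaves `A` at most one negative eigenvalue, so the excluded case is
exactly the one in which `A` is not positive semidefinite; otherwise `g` is convex.
-/

open Matrix Filter Set

noncomputable def qfun {n : ℕ} (M : Matrix (Fin n) (Fin n) ℝ) (m : Fin n → ℝ) (r : ℝ)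
    (x : Fin n → ℝ) : ℝ :=
  x ⬝ᵥ M *ᵥ x + 2 * (m ⬝ᵥ x) + r

theorem eventually_quadratic_neg {α : ℝ} (hα : α < 0) (β γ : ℝ) :
    ∀ᶠ t in atTop, α * t ^ 2 + β * t + γ < 0 := by
  filter_upwards [eventually_ge_atTop 1, eventually_gt_atTop ((|β| + |γ|) / -α)] with t ht1 ht
  rw [div_lt_iff₀ (neg_pos.2 hα)] at ht
  nlinarith [le_abs_self β, le_abs_self γ, abs_nonneg γ]

theorem nonneg_of_forall_quadratic_nonneg {α β γ : ℝ} (h : ∀ t, 0 ≤ α * t ^ 2 + β * t + γ) :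
    0 ≤ α :=
  not_lt.1 fun hα => ((eventually_quadratic_neg hα β γ).exists).elim fun t ht => (h t).not_gt ht

theorem eq_zero_of_forall_linear_pos {β γ : ℝ} (h : ∀ t, 0 < β * t + γ) : β = 0 := by
  by_contra hβ
  have := h (-γ / β)
  rw [mul_div_cancel₀ _ hβ] at this
  linarith

theorem eventually_quartic_neg {a₄ : ℝ} (ha₄ : a₄ < 0) (a₃ a₂ a₁ a₀ : ℝ) :
    ∀ᶠ r in atTop, a₄ * r ^ 4 + a₃ * r ^ 3 + a₂ * r ^ 2 + a₁ * r + a₀ < 0 := by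
  set K := |a₃| + |a₂| + |a₁| + |a₀|
  filter_upwards [eventually_ge_atTop 1, eventually_gt_atTop (K / -a₄)] with r hr1 hr
  rw [div_lt_iff₀ (neg_pos.2 ha₄)] at hr
  have h2 : r ≤ r ^ 2 := by nlinarith
  have h3 : r ^ 2 ≤ r ^ 3 := by nlinarith
  have hlow : a₃ * r ^ 3 + a₂ * r ^ 2 + a₁ * r + a₀ ≤ K * r ^ 3 := by
    nlinarith [le_abs_self a₃, le_abs_self a₂, le_abs_self a₁, le_abs_self a₀,
      abs_nonneg a₂, abs_nonneg a₁, abs_nonneg a₀]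
  have hfactor : a₄ * r ^ 4 + K * r ^ 3 = r ^ 3 * (a₄ * r + K) := by ring
  have : r ^ 3 * (a₄ * r + K) < 0 := mul_neg_of_pos_of_neg (by positivity) (by linarith)
  linarith

theorem exists_forall_add_mul_nonneg {X : Type*} {f h : X → ℝ}
    (hzero : ∀ x, h x = 0 → 0 ≤ f x) (hneg : ∃ x, h x < 0) (hpos : ∃ x, 0 < h x)
    (hsep : ∀ μ x y, f x + μ * h x < 0 → f y + μ * h y < 0 → 0 < h x → 0 < h y) :
    ∃ μ, ∀ x, 0 ≤ f x + μ * h x := by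
  set Mpos := {μ : ℝ | ∀ x, 0 < h x → 0 ≤ f x + μ * h x}
  set Mneg := {μ : ℝ | ∀ x, h x < 0 → 0 ≤ f x + μ * h x}
  have hclosed {s : Set X} : IsClosed {μ : ℝ | ∀ x ∈ s, 0 ≤ f x + μ * h x} := by
    simp only [ofPred_forall]
    exact isClosed_biInter fun x _ => isClosed_le continuous_const (by fun_prop)
  have hcover : univ ⊆ Mpos ∪ Mneg := by
    intro μ _
    by_contra hμ
    simp only [Mpos, Mneg, mem_union, mem_ofPred_eq, not_or, not_forall, not_le] at hμ
    obtain ⟨⟨x, hx, hfx⟩, ⟨y, hy, hfy⟩⟩ := hμ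
    exact (hsep μ x y hfx hfy hx).not_gt hy
  have hexcl : ∀ x, h x ≠ 0 → ∃ μ, f x + μ * h x < 0 :=
    fun x hx => ⟨(-1 - f x) / h x, by rw [div_mul_cancel₀ _ hx]; linarith⟩
  obtain ⟨x, hx⟩ := hneg
  obtain ⟨y, hy⟩ := hpos
  obtain ⟨μ₁, hμ₁⟩ := hexcl x hx.ne
  obtain ⟨μ₂, hμ₂⟩ := hexcl y hy.ne'
  have h₁ : μ₁ ∈ Mpos := (hcover trivial).resolve_right fun h => (h x hx).not_gt hμ₁
  have h₂ : μ₂ ∈ Mneg := (hcover trivial).resolve_left fun h => (h y hy).not_gt hμ₂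
  obtain ⟨μ, -, hμpos, hμneg⟩ := isPreconnected_closed_iff.1 isPreconnected_univ Mpos Mneg
    (by simpa using hclosed (s := {x | 0 < h x})) (by simpa using hclosed (s := {x | h x < 0}))
    hcover ⟨μ₁, trivial, h₁⟩ ⟨μ₂, trivial, h₂⟩
  refine ⟨μ, fun x => ?_⟩
  rcases lt_trichotomy (h x) 0 with hx | hx | hx
  · exact hμneg x hx
  · simpa [hx] using hzero x hx
  · exact hμpos x hx

theorem pos_of_joinedIn {X : Type*} [TopologicalSpace X] {h : X → ℝ} (hh : Continuous h)
    {U : Set X} (hU : ∀ z ∈ U, h z ≠ 0) {x y : X} (hxy : JoinedIn U x y) (hx : 0 < h x) :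
    0 < h y := by
  obtain ⟨γ, hγ⟩ := hxy
  by_contra hy
  obtain ⟨-, ⟨t, rfl⟩, ht⟩ := (isPreconnected_range γ.continuous).intermediate_value
    ⟨1, γ.target⟩ ⟨0, γ.source⟩ hh.continuousOn ⟨not_lt.1 hy, hx.le⟩
  exact hU _ (hγ t) ht

theorem joinedIn_add_smul {E : Type*} [AddCommGroup E] [Module ℝ E] [TopologicalSpace E]
    [ContinuousAdd E] [ContinuousSMul ℝ E] {U : Set E} {z w : E}
    (hray : ∀ t : ℝ, 0 ≤ t → z + t • w ∈ U) {t : ℝ} (ht : 0 ≤ t) : JoinedIn U z (z + t • w) := by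
  refine JoinedIn.of_segment_subset ?_
  rw [segment_eq_image']
  rintro _ ⟨θ, hθ, rfl⟩
  simpa [smul_smul] using hray (θ * t) (mul_nonneg hθ.1 ht)

theorem pos_of_pos_of_convexOn {E : Type*} [AddCommGroup E] [Module ℝ E] [TopologicalSpace E]
    [ContinuousAdd E] [ContinuousSMul ℝ E] {g h : E → ℝ} (hg : ConvexOn ℝ univ g)
    (hh : Continuous h) (hzero : ∀ z, h z = 0 → 0 ≤ g z) {x y : E} (hx : g x < 0)
    (hy : g y < 0) (hhx : 0 < h x) : 0 < h y := by
  refine pos_of_joinedIn hh (U := {z ∈ univ | g z < 0})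
    (fun z hz hz0 => (hzero z hz0).not_gt hz.2) (JoinedIn.of_segment_subset ?_) hhx
  exact (hg.convex_lt 0).segment_subset ⟨trivial, hx⟩ ⟨trivial, hy⟩

theorem exists_quadForm_ne_zero {n : ℕ} {B : Matrix (Fin n) (Fin n) ℝ} (hB : Bᵀ = B)
    (hB0 : B ≠ 0) : ∃ u, u ⬝ᵥ B *ᵥ u ≠ 0 := by
  by_contra! h
  refine hB0 (ext fun i j => ?_)
  have hdiag (k : Fin n) : B k k = 0 := by simpa using h (Pi.single k 1)
  have hji : B j i = B i j := by rw [← transpose_apply B i j, hB]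
  have hij := h (Pi.single i 1 + Pi.single j 1)
  simp [mulVec_add, hdiag, hji] at hij
  simpa using hij

theorem continuous_qfun {n : ℕ} (M : Matrix (Fin n) (Fin n) ℝ) (m : Fin n → ℝ) (e : ℝ) :
    Continuous (qfun M m e) := by
  unfold qfun
  fun_prop

section Qfun

variable {n k : ℕ} {M : Matrix (Fin n) (Fin n) ℝ} {m : Fin n → ℝ} {e : ℝ}

theorem qfun_add_smul (hM : Mᵀ = M) (p v : Fin n → ℝ) (t : ℝ) :
    qfun M m e (p + t • v) =
      qfun M m e p + 2 * t * (v ⬝ᵥ M *ᵥ p + m ⬝ᵥ v) + t ^ 2 * (v ⬝ᵥ M *ᵥ v) := by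
  have hsymm : p ⬝ᵥ M *ᵥ v = v ⬝ᵥ M *ᵥ p := by
    rw [dotProduct_mulVec, ← mulVec_transpose, hM, dotProduct_comm]
  simp only [qfun, mulVec_add, mulVec_smul, dotProduct_add, add_dotProduct, dotProduct_smul,
    smul_dotProduct, smul_eq_mul, hsymm]
  ring

theorem qfun_smul (t : ℝ) (v : Fin n → ℝ) :
    qfun M m e (t • v) = (v ⬝ᵥ M *ᵥ v) * t ^ 2 + 2 * (m ⬝ᵥ v) * t + e := by
  simp only [qfun, mulVec_smul, dotProduct_smul, smul_dotProduct, smul_eq_mul]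
  ring

theorem qfun_add_mul_qfun (A B : Matrix (Fin n) (Fin n) ℝ) (a b : Fin n → ℝ) (c d μ : ℝ)
    (x : Fin n → ℝ) :
    qfun A a c x + μ * qfun B b d x = qfun (A + μ • B) (a + μ • b) (c + μ * d) x := by
  simp only [qfun, add_mulVec, smul_mulVec, dotProduct_add, add_dotProduct, dotProduct_smul,
    smul_dotProduct, smul_eq_mul]
  ring

theorem qfun_add_mulVec (hM : Mᵀ = M) (V : Matrix (Fin n) (Fin k) ℝ) (x₀ : Fin n → ℝ)
    (y : Fin k → ℝ) :
    qfun M m e (x₀ + V *ᵥ y) = qfun (Vᵀ * M * V) (Vᵀ *ᵥ (M *ᵥ x₀ + m)) (qfun M m e x₀) y := by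
  have hV (z : Fin n → ℝ) (w : Fin k → ℝ) : w ⬝ᵥ Vᵀ *ᵥ z = V *ᵥ w ⬝ᵥ z := by
    rw [dotProduct_mulVec, vecMul_transpose]
  have := qfun_add_smul (m := m) (e := e) hM x₀ (V *ᵥ y) 1
  rw [one_smul] at this
  change _ = y ⬝ᵥ (Vᵀ * M * V) *ᵥ y + 2 * (Vᵀ *ᵥ (M *ᵥ x₀ + m) ⬝ᵥ y) + qfun M m e x₀
  rw [this, ← mulVec_mulVec, ← mulVec_mulVec, hV, dotProduct_comm _ y, hV,
    dotProduct_add, dotProduct_comm m]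
  ring

theorem convexOn_qfun (hM : ∀ v, 0 ≤ v ⬝ᵥ M *ᵥ v) : ConvexOn ℝ univ (qfun M m e) := by
  refine ⟨convex_univ, fun x _ y _ s t hs ht hst => ?_⟩
  have key : s * qfun M m e x + t * qfun M m e y - qfun M m e (s • x + t • y) =
      s * t * ((x - y) ⬝ᵥ M *ᵥ (x - y)) := by
    obtain rfl : t = 1 - s := by linarith
    simp only [qfun, mulVec_add, mulVec_sub, mulVec_smul, dotProduct_add, dotProduct_sub,
      add_dotProduct, sub_dotProduct, dotProduct_smul, smul_dotProduct, smul_eq_mul]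
    ring
  simp only [smul_eq_mul]
  nlinarith [mul_nonneg (mul_nonneg hs ht) (hM (x - y))]

theorem quadForm_nonneg_of_forall_qfun_add_smul_nonneg (hM : Mᵀ = M) {p w : Fin n → ℝ}
    (h : ∀ s : ℝ, 0 ≤ qfun M m e (p + s • w)) :
    0 ≤ w ⬝ᵥ M *ᵥ w := by
  refine nonneg_of_forall_quadratic_nonneg (β := 2 * (w ⬝ᵥ M *ᵥ p + m ⬝ᵥ w))
    (γ := qfun M m e p) fun s => ?_
  have := h s
  rw [qfun_add_smul hM] at this
  linarith

end Qfun

theorem posSemidef_fromBlocks_of_qfun_nonneg {k : ℕ} {P : Matrix (Fin k) (Fin k) ℝ}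
    (hP : Pᵀ = P) {l : Fin k → ℝ} {r : ℝ} (h : ∀ y, 0 ≤ qfun P l r y) :
    (fromBlocks P (of fun i (_ : Fin 1) => l i) (of fun (_ : Fin 1) j => l j)
      (of fun _ _ => r)).PosSemidef := by
  refine .of_dotProduct_mulVec_nonneg (.fromBlocks hP (by ext; simp) (by ext; simp))
    fun Y => ?_
  set y := Y ∘ Sum.inl
  set t := Y (Sum.inr 0)
  have hY : star Y ⬝ᵥ (fromBlocks P (of fun i (_ : Fin 1) => l i) (of fun (_ : Fin 1) j => l j)
      (of fun _ _ => r)) *ᵥ Y = y ⬝ᵥ P *ᵥ y + 2 * t * (l ⬝ᵥ y) + t ^ 2 * r := by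
    rw [← Sum.elim_comp_inl_inr Y]
    simp only [fromBlocks_mulVec, star_trivial, sumElim_dotProduct_sumElim]
    simp [dotProduct, mulVec, Finset.mul_sum, y, t]
    have hcomm (i) :
        Y (Sum.inl i) * (l i * Y (Sum.inr 0)) = Y (Sum.inr 0) * (l i * Y (Sum.inl i)) := by
      ring
    simp only [mul_add, Finset.sum_add_distrib, Finset.mul_sum, hcomm, two_mul, add_mul]
    ring
  rw [hY]
  rcases eq_or_ne t 0 with ht | ht
  · have := nonneg_of_forall_quadratic_nonneg fun s => (qfun_smul s y ▸ h (s • y))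
    simpa [ht] using this
  · have hscale : y ⬝ᵥ P *ᵥ y + 2 * t * (l ⬝ᵥ y) + t ^ 2 * r =
        t ^ 2 * qfun P l r (t⁻¹ • y) := by
      rw [qfun_smul]
      field_simp
    rw [hscale]
    exact mul_nonneg (sq_nonneg t) (h _)

theorem card_eigenvalues_neg_le_one {n : ℕ} {A : Matrix (Fin n) (Fin n) ℝ} (hA : A.IsHermitian)
    {b : Fin n → ℝ} (hb : ∀ w, b ⬝ᵥ w = 0 → 0 ≤ w ⬝ᵥ A *ᵥ w) :
    (Finset.univ.filter fun i => hA.eigenvalues i < 0).card ≤ 1 := by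
  refine Finset.card_le_one.2 fun i hi j hj => ?_
  simp only [Finset.mem_filter, Finset.mem_univ, true_and] at hi hj
  by_contra hij
  set u : Fin n → Fin n → ℝ := fun k => hA.eigenvectorBasis k
  have horth (k l : Fin n) : u k ⬝ᵥ u l = if k = l then 1 else 0 := by
    have := orthonormal_iff_ite.1 hA.eigenvectorBasis.orthonormal k l
    simpa [EuclideanSpace.inner_eq_star_dotProduct, u, dotProduct_comm] using this
  have hQ (s t : ℝ) : (s • u i + t • u j) ⬝ᵥ A *ᵥ (s • u i + t • u j) =
      s ^ 2 * hA.eigenvalues i + t ^ 2 * hA.eigenvalues j := by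
    have hmul (k : Fin n) : A *ᵥ u k = hA.eigenvalues k • u k := hA.mulVec_eigenvectorBasis k
    simp only [mulVec_add, mulVec_smul, hmul, dotProduct_add, add_dotProduct, dotProduct_smul,
      smul_dotProduct, horth, smul_eq_mul, if_pos, if_neg hij, if_neg (Ne.symm hij)]
    ring
  have hw := hb ((b ⬝ᵥ u j) • u i + (-(b ⬝ᵥ u i)) • u j) (by
    simp only [dotProduct_add, dotProduct_smul, smul_eq_mul]; ring)
  rw [hQ] at hw
  rcases eq_or_ne (b ⬝ᵥ u i) 0 with h0 | h0
  · have hii : u i ⬝ᵥ A *ᵥ u i = hA.eigenvalues i := by simpa using hQ 1 0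
    linarith [hb (u i) h0]
  · nlinarith [pow_pos (abs_pos.2 h0) 2, sq_abs (b ⬝ᵥ u i), sq_nonneg (b ⬝ᵥ u j)]

theorem posSemidef_of_qfun_nonneg_on_hyperplane {n k : ℕ} {A : Matrix (Fin n) (Fin n) ℝ}
    (hA : A.IsHermitian) {a b x₀ : Fin n → ℝ} {c d : ℝ} {V : Matrix (Fin n) (Fin k) ℝ}
    (hx₀ : qfun 0 b d x₀ = 0) (hV : b ᵥ* V = 0)
    (hzero : ∀ x, qfun 0 b d x = 0 → 0 ≤ qfun A a c x)
    (hexc : (Finset.univ.filter fun i => hA.eigenvalues i < 0).card = 1 →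
      ¬ (fromBlocks (Vᵀ * A * V) (of fun i (_ : Fin 1) => (Vᵀ *ᵥ (A *ᵥ x₀ + a)) i)
        (of fun (_ : Fin 1) j => (Vᵀ *ᵥ (A *ᵥ x₀ + a)) j)
        (of fun _ _ => qfun A a c x₀)).PosSemidef) :
    A.PosSemidef := by
  have hAT : Aᵀ = A := by rw [← conjTranspose_eq_transpose_of_trivial]; exact hA
  have hplane {x} (hx : b ⬝ᵥ x = 0) : qfun 0 b d (x₀ + x) = 0 := by
    simpa [qfun, dotProduct_add, hx] using hx₀
  have hcard := card_eigenvalues_neg_le_one hA (b := b) fun w hw =>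
    quadForm_nonneg_of_forall_qfun_add_smul_nonneg hAT fun s =>
      hzero _ (hplane (x := s • w) (by simp [hw]))
  have hblock := posSemidef_fromBlocks_of_qfun_nonneg (P := Vᵀ * A * V)
    (l := Vᵀ *ᵥ (A *ᵥ x₀ + a)) (r := qfun A a c x₀)
    (by simp [transpose_mul, hAT, Matrix.mul_assoc]) fun y => by
      rw [← qfun_add_mulVec hAT]
      exact hzero _ (hplane (by rw [dotProduct_mulVec, hV, zero_dotProduct]))
  have hnone : (Finset.univ.filter fun i => hA.eigenvalues i < 0) = ∅ :=
    Finset.card_eq_zero.1 (Nat.lt_one_iff.1 (hcard.lt_of_ne fun h => hexc h hblock))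
  exact hA.posSemidef_iff_eigenvalues_nonneg.2 fun i => by simpa using Finset.ext_iff.1 hnone i

section Indefinite

variable {n : ℕ} {M B : Matrix (Fin n) (Fin n) ℝ} {m b w : Fin n → ℝ} {e d : ℝ}

theorem qfun_add_smul_neg_or (hM : Mᵀ = M) (hw : w ⬝ᵥ M *ᵥ w < 0) {z : Fin n → ℝ}
    (hz : qfun M m e z < 0) :
    (∀ t : ℝ, 0 ≤ t → qfun M m e (z + t • w) < 0) ∨
      ∀ t : ℝ, 0 ≤ t → qfun M m e (z + t • -w) < 0 := by
  by_contra! h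
  obtain ⟨⟨t₀, ht₀, h₀⟩, ⟨t₁, ht₁, h₁⟩⟩ := h
  rw [qfun_add_smul hM] at h₀
  rw [smul_neg, ← neg_smul, qfun_add_smul hM] at h₁
  rcases ht₀.eq_or_lt with rfl | ht₀
  · simp at h₀
    linarith
  · have : qfun M m e z + t₀ * t₁ * (w ⬝ᵥ M *ᵥ w) < 0 := by nlinarith [mul_nonneg ht₀.le ht₁]
    nlinarith [mul_pos (add_pos_of_pos_of_nonneg ht₀ ht₁) (neg_pos.2 this), mul_nonneg ht₁ h₀,
      mul_nonneg ht₀.le h₁]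

theorem eventually_joinedIn_add_smul (hM : Mᵀ = M) (hw : w ⬝ᵥ M *ᵥ w < 0) (p q : Fin n → ℝ) :
    ∀ᶠ t : ℝ in atTop, JoinedIn {z | qfun M m e z < 0} (p + t • w) (q + t • w) := by
  have hseg : IsCompact (segment ℝ p q) := by
    rw [segment_eq_image_lineMap]
    exact (isCompact_Icc (a := (0 : ℝ)) (b := 1)).image AffineMap.lineMap_continuous
  obtain ⟨K, hK⟩ := hseg.exists_bound_of_continuousOn
    (f := fun r => |qfun M m e r| + |2 * (w ⬝ᵥ M *ᵥ r + m ⬝ᵥ w)|)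
    (by unfold qfun; fun_prop)
  filter_upwards [eventually_quadratic_neg hw K K, eventually_ge_atTop 0] with t ht ht0
  refine JoinedIn.of_segment_subset ?_
  rw [add_comm p, add_comm q, ← segment_translate_image]
  rintro _ ⟨r, hr, rfl⟩
  have hK := hK r hr
  rw [Real.norm_eq_abs, abs_of_nonneg (by positivity)] at hK
  show qfun M m e (t • w + r) < 0
  rw [add_comm, qfun_add_smul hM]
  nlinarith [neg_abs_le (qfun M m e r), neg_abs_le (2 * (w ⬝ᵥ M *ᵥ r + m ⬝ᵥ w)),
    le_abs_self (qfun M m e r), le_abs_self (2 * (w ⬝ᵥ M *ᵥ r + m ⬝ᵥ w))]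

theorem eventually_joinedIn_of_ray (hM : Mᵀ = M) (hw : w ⬝ᵥ M *ᵥ w < 0) {z : Fin n → ℝ}
    (hray : ∀ t : ℝ, 0 ≤ t → qfun M m e (z + t • w) < 0) (p : Fin n → ℝ) :
    ∀ᶠ t : ℝ in atTop, JoinedIn {z | qfun M m e z < 0} z (p + t • w) := by
  filter_upwards [eventually_joinedIn_add_smul hM hw z p, eventually_ge_atTop 0] with t ht ht0
  exact (joinedIn_add_smul hray ht0).trans ht

theorem exists_qfun_eq_zero_qfun_neg_of_mulVec_eq_zero (hM : Mᵀ = M) (hB : Bᵀ = B)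
    (hB0 : B ≠ 0) (hw : w ⬝ᵥ M *ᵥ w < 0) (hBw : ∀ p, w ⬝ᵥ B *ᵥ p = 0) (hbw : b ⬝ᵥ w ≠ 0) :
    ∃ z, qfun B b d z = 0 ∧ qfun M m e z < 0 := by
  obtain ⟨u, hu⟩ := exists_quadForm_ne_zero hB hB0
  -- on the plane spanned by `u` and `w`, the zero set of `qfun B b d` is the parabola
  -- `r ↦ r • u + τ r • w`, along which `qfun M m e` is a quartic with leading coefficient
  -- `(wᵀ M w) (uᵀ B u)² / (2 bᵀw)² < 0`
  set s := b ⬝ᵥ w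
  set τ : ℝ → ℝ := fun r => -qfun B b d (r • u) / (2 * s)
  have hzero r : qfun B b d (r • u + τ r • w) = 0 := by
    rw [qfun_add_smul hB, hBw, hBw, zero_add, mul_zero, add_zero]
    simp only [τ]
    field_simp
    ring
  set α := w ⬝ᵥ M *ᵥ w
  set β₂ := u ⬝ᵥ B *ᵥ u
  set β₁ := b ⬝ᵥ u
  set γ₁ := w ⬝ᵥ M *ᵥ u
  set γ₀ := m ⬝ᵥ w
  set δ₂ := u ⬝ᵥ M *ᵥ u
  set δ₁ := m ⬝ᵥ u
  have hquartic r : 4 * s ^ 2 * qfun M m e (r • u + τ r • w) =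
      α * β₂ ^ 2 * r ^ 4 + (4 * α * β₂ * β₁ - 4 * s * β₂ * γ₁) * r ^ 3
      + (α * (4 * β₁ ^ 2 + 2 * β₂ * d) - 4 * s * (β₂ * γ₀ + 2 * β₁ * γ₁) + 4 * s ^ 2 * δ₂) * r ^ 2
      + (4 * α * β₁ * d - 4 * s * (2 * β₁ * γ₀ + d * γ₁) + 8 * s ^ 2 * δ₁) * r
      + (α * d ^ 2 - 4 * s * d * γ₀ + 4 * s ^ 2 * e) := by
    simp only [qfun_add_smul hM, qfun_smul, mulVec_smul, dotProduct_smul, smul_eq_mul, τ]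
    field_simp
    ring
  obtain ⟨r, hr⟩ :=
    (eventually_quartic_neg (mul_neg_of_neg_of_pos hw (pow_two_pos_of_ne_zero hu)) _ _ _ _).exists
  refine ⟨r • u + τ r • w, hzero r, neg_of_mul_neg_right (a := 4 * s ^ 2) ?_ (by positivity)⟩
  rwa [hquartic]

theorem exists_qfun_eq_zero_qfun_neg (hM : Mᵀ = M) (hB : Bᵀ = B) (hB0 : B ≠ 0)
    (hw : w ⬝ᵥ M *ᵥ w < 0) (hpos : ∀ p, ∀ᶠ t : ℝ in atTop, 0 < qfun B b d (p + t • w))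
    (hneg : ∀ p, ∀ᶠ t : ℝ in atTop, qfun B b d (p + t • -w) < 0) :
    ∃ z, qfun B b d z = 0 ∧ qfun M m e z < 0 := by
  have hslope p : 0 < w ⬝ᵥ B *ᵥ p + b ⬝ᵥ w := by
    obtain ⟨t, ht, hplus, hminus⟩ := ((eventually_gt_atTop 0).and ((hpos p).and (hneg p))).exists
    rw [qfun_add_smul hB] at hplus hminus
    simp only [mulVec_neg, dotProduct_neg, neg_dotProduct, neg_neg] at hminus
    nlinarith
  have hBw p : w ⬝ᵥ B *ᵥ p = 0 :=
    eq_zero_of_forall_linear_pos (γ := b ⬝ᵥ w) fun t => by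
      have := hslope (t • p)
      rwa [mulVec_smul, dotProduct_smul, smul_eq_mul, mul_comm] at this
  exact exists_qfun_eq_zero_qfun_neg_of_mulVec_eq_zero hM hB hB0 hw hBw
    (by simpa using (hslope 0).ne')

theorem pos_of_pos_of_quadForm_neg (hM : Mᵀ = M) (hB : Bᵀ = B) (hB0 : B ≠ 0)
    (hw : w ⬝ᵥ M *ᵥ w < 0) (hzero : ∀ z, qfun B b d z = 0 → 0 ≤ qfun M m e z)
    {x y : Fin n → ℝ} (hx : qfun M m e x < 0) (hy : qfun M m e y < 0)
    (hhx : 0 < qfun B b d x) : 0 < qfun B b d y := by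
  have hU : ∀ z ∈ {z | qfun M m e z < 0}, qfun B b d z ≠ 0 :=
    fun z hz h0 => (hzero z h0).not_gt hz
  wlog hxray : ∀ t : ℝ, 0 ≤ t → qfun M m e (x + t • w) < 0 generalizing w
  · exact this (w := -w) (by simpa [mulVec_neg] using hw)
      ((qfun_add_smul_neg_or hM hw hx).resolve_left hxray)
  by_contra hhy
  replace hhy : 0 < -qfun B b d y := neg_pos.2 ((not_lt.1 hhy).lt_of_ne (hU y hy))
  have hw' : -w ⬝ᵥ M *ᵥ -w < 0 := by simpa [mulVec_neg] using hw
  rcases qfun_add_smul_neg_or hM hw hy with hyray | hyray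
  · obtain ⟨t, hxt, hyt⟩ := ((eventually_joinedIn_of_ray hM hw hxray y).and
      (eventually_joinedIn_of_ray hM hw hyray y)).exists
    exact hhy.not_gt <| neg_neg_of_pos <|
      pos_of_joinedIn (continuous_qfun B b d) hU (hxt.trans hyt.symm) hhx
  · obtain ⟨z, hz, hMz⟩ := exists_qfun_eq_zero_qfun_neg (e := e) hM hB hB0 hw
      (fun p => (eventually_joinedIn_of_ray hM hw hxray p).mono fun t ht =>
        pos_of_joinedIn (continuous_qfun B b d) hU ht hhx)
      (fun p => (eventually_joinedIn_of_ray hM hw' hyray p).mono fun t ht =>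
        neg_pos.1 (pos_of_joinedIn (continuous_qfun B b d).neg
          (fun z hz => neg_ne_zero.2 (hU z hz)) ht hhy))
    exact (hzero z hz).not_gt hMz

end Indefinite

theorem s_lemma_with_equality_general (n : ℕ)
    (A B : Matrix (Fin n) (Fin n) ℝ) (hA : A.IsHermitian) (hB : B.IsSymm)
    (a b : Fin n → ℝ) (c d : ℝ)
    (V : Matrix (Fin n) (Fin (n - 1)) ℝ)
    (hVspan : (Submodule.span ℝ (Set.range fun j : Fin (n - 1) => fun i : Fin n => V i j)
      : Set (Fin n → ℝ)) = {x : Fin n → ℝ | b ⬝ᵥ x = 0})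
    (hSlater : ∃ x' x'' : Fin n → ℝ, qfun B b d x' < 0 ∧ 0 < qfun B b d x'')
    (hexc : ¬ (((Finset.univ.filter fun i => hA.eigenvalues i < 0).card = 1) ∧ B = 0 ∧ b ≠ 0 ∧
      (Matrix.fromBlocks (Vᵀ * A * V)
        (Matrix.of fun i (_ : Fin 1) =>
          (Vᵀ *ᵥ (A *ᵥ (-(d / (2 * (b ⬝ᵥ b))) • b) + a)) i)
        (Matrix.of fun (_ : Fin 1) j =>
          (Vᵀ *ᵥ (A *ᵥ (-(d / (2 * (b ⬝ᵥ b))) • b) + a)) j)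
        (Matrix.of fun (_ _ : Fin 1) =>
          qfun A a c (-(d / (2 * (b ⬝ᵥ b))) • b))).PosSemidef)) :
    (¬ ∃ x : Fin n → ℝ, qfun A a c x < 0 ∧ qfun B b d x = 0) ↔
      (∃ μ : ℝ, ∀ x : Fin n → ℝ, qfun A a c x + μ * qfun B b d x ≥ 0) := by
  have hAT : Aᵀ = A := by rw [← conjTranspose_eq_transpose_of_trivial]; exact hA
  obtain ⟨x', x'', hx', hx''⟩ := hSlater
  refine ⟨fun hnone => ?_, fun ⟨μ, hμ⟩ ⟨x, hAx, hBx⟩ => by linarith [hμ x, hBx ▸ mul_zero μ]⟩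
  have hzero x (hx : qfun B b d x = 0) : 0 ≤ qfun A a c x := not_lt.1 fun h => hnone ⟨x, h, hx⟩
  refine exists_forall_add_mul_nonneg hzero ⟨x', hx'⟩ ⟨x'', hx''⟩ fun μ x y hx hy hhx => ?_
  rw [qfun_add_mul_qfun] at hx hy
  have hzeroμ z (hz : qfun B b d z = 0) : 0 ≤ qfun (A + μ • B) (a + μ • b) (c + μ * d) z := by
    simpa [← qfun_add_mul_qfun, hz] using hzero z hz
  by_cases hconvex : ∀ v, 0 ≤ v ⬝ᵥ (A + μ • B) *ᵥ v
  · exact pos_of_pos_of_convexOn (convexOn_qfun hconvex) (continuous_qfun _ _ _) hzeroμ hx hy hhx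
  obtain ⟨w, hw⟩ := not_forall.1 hconvex
  refine pos_of_pos_of_quadForm_neg (by simp [hAT, hB.eq]) hB.eq ?_ (not_le.1 hw) hzeroμ hx hy hhx
  rintro rfl
  have hb : b ≠ 0 := by rintro rfl; simp [qfun] at hx' hx''; linarith
  have hbb : b ⬝ᵥ b ≠ 0 := fun h => hb (dotProduct_self_eq_zero.1 h)
  have hApsd := posSemidef_of_qfun_nonneg_on_hyperplane hA (by simp [qfun]; field_simp; ring)
    (funext fun j => hVspan.subset (Submodule.subset_span ⟨j, rfl⟩)) hzero
    fun h1 hP => hexc ⟨h1, rfl, hb, hP⟩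
  exact hw (by simpa using hApsd.dotProduct_mulVec_nonneg w)

/-- The S-lemma with equality (Xia, Wang, Sheu). -/
theorem s_lemma_with_equality (n : ℕ) (hn : 0 < n)
    (A B : Matrix (Fin n) (Fin n) ℝ) (hA : A.IsHermitian) (hB : B.IsSymm)
    (a b : Fin n → ℝ) (c d : ℝ)
    (V : Matrix (Fin n) (Fin (n - 1)) ℝ)
    (hVindep : LinearIndependent ℝ (fun j : Fin (n - 1) => fun i : Fin n => V i j))
    (hVspan : (Submodule.span ℝ (Set.range fun j : Fin (n - 1) => fun i : Fin n => V i j)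
      : Set (Fin n → ℝ)) = {x : Fin n → ℝ | b ⬝ᵥ x = 0})
    (hSlater : ∃ x' x'' : Fin n → ℝ, qfun B b d x' < 0 ∧ 0 < qfun B b d x'')
    (hexc : ¬ (((Finset.univ.filter fun i => hA.eigenvalues i < 0).card = 1) ∧ B = 0 ∧ b ≠ 0 ∧
      (Matrix.fromBlocks (Vᵀ * A * V)
        (Matrix.of fun i (_ : Fin 1) =>
          (Vᵀ *ᵥ (A *ᵥ (-(d / (2 * (b ⬝ᵥ b))) • b) + a)) i)
        (Matrix.of fun (_ : Fin 1) j =>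
          (Vᵀ *ᵥ (A *ᵥ (-(d / (2 * (b ⬝ᵥ b))) • b) + a)) j)
        (Matrix.of fun (_ _ : Fin 1) =>
          qfun A a c (-(d / (2 * (b ⬝ᵥ b))) • b))).PosSemidef)) :
    (¬ ∃ x : Fin n → ℝ, qfun A a c x < 0 ∧ qfun B b d x = 0) ↔
      (∃ μ : ℝ, ∀ x : Fin n → ℝ, qfun A a c x + μ * qfun B b d x ≥ 0) :=
  s_lemma_with_equality_general n A B hA hB a b c d V hVspan hSlater hexc
end

section
/- Let M be a real symmetric n×n matrix, m ∈ ℝⁿ and r ∈ ℝ. Then xᵀMx + 2mᵀx + r ≥ 0 for all x ∈ ℝⁿ if and only if the (n+1)×(n+1) block matrix [[M, m], [mᵀ, r]] is positive semidefinite. -/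
/-!
For `y = (x, t)` the form `yᵀ B y` of the bordered matrix is the homogenization
`xᵀMx + 2t mᵀx + t²r`, which equals `t² q(x / t)` when `t ≠ 0`. At `t = 0` it is `xᵀMx`,
the leading coefficient of the nonnegative quadratic polynomial `s ↦ q(s x)`.
-/

open Matrix

lemma leadingCoeff_nonneg_of_forall_quadratic_nonneg {a b c : ℝ}
    (h : ∀ s : ℝ, 0 ≤ a * (s * s) + b * s + c) : 0 ≤ a := by
  have hdisc : b ^ 2 ≤ 4 * a * c := by simpa [discrim, sub_nonpos] using discrim_le_zero h
  have hc : 0 ≤ c := by simpa using h 0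
  by_contra! ha
  have hb : b = 0 := by nlinarith [mul_nonpos_of_nonpos_of_nonneg ha.le hc]
  have hc' : c = 0 := by nlinarith
  simpa [hb, hc', ha.not_ge] using h 1

section Bordered

variable {ι : Type*} (M : Matrix ι ι ℝ) (m : ι → ℝ) (r : ℝ)

def borderedMatrix : Matrix (ι ⊕ Fin 1) (ι ⊕ Fin 1) ℝ :=
  fromBlocks M (of fun i _ => m i) (of fun _ j => m j) (of fun _ _ => r)

variable {M} in
lemma isHermitian_borderedMatrix (hM : M.IsSymm) : (borderedMatrix M m r).IsHermitian := by
  rw [IsHermitian, conjTranspose_eq_transpose_of_trivial, borderedMatrix, fromBlocks_transpose,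
    hM.eq]
  rfl

variable [Fintype ι]

lemma dotProduct_borderedMatrix_mulVec (x : ι → ℝ) (s : Fin 1 → ℝ) :
    Sum.elim x s ⬝ᵥ borderedMatrix M m r *ᵥ Sum.elim x s =
      x ⬝ᵥ M *ᵥ x + 2 * s 0 * (m ⬝ᵥ x) + s 0 ^ 2 * r := by
  have hB : (of fun i (_ : Fin 1) => m i) *ᵥ s = s 0 • m := by
    ext i; simp [mulVec, dotProduct, mul_comm]
  have hC : s ⬝ᵥ (of fun (_ : Fin 1) j => m j) *ᵥ x = s 0 * (m ⬝ᵥ x) := by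
    simp [mulVec, dotProduct]
  have hD : s ⬝ᵥ (of fun (_ _ : Fin 1) => r) *ᵥ s = s 0 ^ 2 * r := by
    simp [mulVec, dotProduct]; ring
  rw [borderedMatrix, fromBlocks_mulVec, sumElim_dotProduct_sumElim, Sum.elim_comp_inl,
    Sum.elim_comp_inr, dotProduct_add, dotProduct_add, hB, hC, hD, dotProduct_smul,
    dotProduct_comm x m, smul_eq_mul]
  ring

lemma quadratic_smul (x : ι → ℝ) (s : ℝ) :
    (s • x) ⬝ᵥ M *ᵥ (s • x) + 2 * (m ⬝ᵥ s • x) + r =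
      (x ⬝ᵥ M *ᵥ x) * (s * s) + 2 * (m ⬝ᵥ x) * s + r := by
  simp only [smul_dotProduct, mulVec_smul, dotProduct_smul, smul_eq_mul]
  ring

variable {M m r} in
lemma homogenized_quadratic_nonneg (h : ∀ x : ι → ℝ, 0 ≤ x ⬝ᵥ M *ᵥ x + 2 * (m ⬝ᵥ x) + r)
    (x : ι → ℝ) (t : ℝ) : 0 ≤ x ⬝ᵥ M *ᵥ x + 2 * t * (m ⬝ᵥ x) + t ^ 2 * r := by
  rcases eq_or_ne t 0 with rfl | ht
  · simpa using leadingCoeff_nonneg_of_forall_quadratic_nonneg fun s =>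
      quadratic_smul M m r x s ▸ h (s • x)
  · refine (mul_nonneg (sq_nonneg t) (h (t⁻¹ • x))).trans_eq ?_
    rw [quadratic_smul]
    field_simp

end Bordered

theorem quadratic_nonneg_iff_bordered_psd_general (n : ℕ)
    (M : Matrix (Fin n) (Fin n) ℝ) (hM : M.IsSymm) (m : Fin n → ℝ) (r : ℝ) :
    (∀ x : Fin n → ℝ, x ⬝ᵥ M *ᵥ x + 2 * (m ⬝ᵥ x) + r ≥ 0) ↔
      (Matrix.fromBlocks M
        (Matrix.of fun i (_ : Fin 1) => m i)
        (Matrix.of fun (_ : Fin 1) j => m j)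
        (Matrix.of fun (_ _ : Fin 1) => r)).PosSemidef := by
  change _ ↔ (borderedMatrix M m r).PosSemidef
  rw [posSemidef_iff_dotProduct_mulVec]
  constructor
  · intro h
    refine ⟨isHermitian_borderedMatrix m r hM, fun y => ?_⟩
    rw [star_trivial, ← Sum.elim_comp_inl_inr y, dotProduct_borderedMatrix_mulVec]
    exact homogenized_quadratic_nonneg h _ _
  · rintro ⟨-, h⟩ x
    simpa [dotProduct_borderedMatrix_mulVec] using h (Sum.elim x 1)

/-- A quadratic function `xᵀMx + 2mᵀx + r` is globally nonnegative if and only if the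
bordered matrix `[[M, m], [mᵀ, r]]` is positive semidefinite. -/
theorem quadratic_nonneg_iff_bordered_psd (n : ℕ) (hn : 0 < n)
    (M : Matrix (Fin n) (Fin n) ℝ) (hM : M.IsSymm) (m : Fin n → ℝ) (r : ℝ) :
    (∀ x : Fin n → ℝ, x ⬝ᵥ M *ᵥ x + 2 * (m ⬝ᵥ x) + r ≥ 0) ↔
      (Matrix.fromBlocks M
        (Matrix.of fun i (_ : Fin 1) => m i)
        (Matrix.of fun (_ : Fin 1) j => m j)
        (Matrix.of fun (_ _ : Fin 1) => r)).PosSemidef :=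
  quadratic_nonneg_iff_bordered_psd_general n M hM m r
end
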